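/- arXiv:1307.0804 — 3 statements merged into one kernel-verified Lean document; each statement's English description precedes it below -/
import Mathlib

section
/- Let μ be a locally finite Borel measure on ℝ^n and let m ≥ 1 be a positive integer. If μ is m-rectifiable, then the lower Hausdorff m-density satisfies Θ^m_*(μ,x) > 0 at μ-almost every x ∈ ℝ^n. -/
open MeasureTheory Metric Set Filter
open scoped ENNReal NNReal Topology

noncomputable section

/-- The closed dyadic cube in `ℝⁿ` of generation `k` (side length `2^(-k)`) with corner `z`. -/
def dyadicCube (n : ℕ) (k : ℤ) (z : Fin n → ℤ) : Set (EuclideanSpace ℝ (Fin n)) :=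
  {x | ∀ i, (z i : ℝ) * (2 : ℝ) ^ (-k) ≤ x i ∧ x i ≤ ((z i : ℝ) + 1) * (2 : ℝ) ^ (-k)}

/-- The concentric dilate `λQ` of the dyadic cube `Q` of generation `k` with corner `z`. -/
def dilatedCube (n : ℕ) (lam : ℝ) (k : ℤ) (z : Fin n → ℤ) : Set (EuclideanSpace ℝ (Fin n)) :=
  {x | ∀ i, |x i - ((z i : ℝ) + 1 / 2) * (2 : ℝ) ^ (-k)| ≤ lam * (2 : ℝ) ^ (-k) / 2}

/-- The axis-parallel cube with center `c` and side length `s`. -/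
def axisCube {n : ℕ} (c : EuclideanSpace ℝ (Fin n)) (s : ℝ) : Set (EuclideanSpace ℝ (Fin n)) :=
  {x | ∀ i, |x i - c i| ≤ s / 2}

/-- `L` is an (affine) line in `ℝⁿ`. -/
def IsLine {n : ℕ} (L : Set (EuclideanSpace ℝ (Fin n))) : Prop :=
  ∃ p v : EuclideanSpace ℝ (Fin n), v ≠ 0 ∧ L = {x | ∃ t : ℝ, x = p + t • v}

/-- `β₂(μ,Q)²`, the square of the `L²` beta number of `μ` on `Q`:
`inf_ℓ ∫_Q (dist(x,ℓ)/diam Q)² dμ(x)/μ(Q)`. When `μ Q = 0` this equals `0`,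
since `0/0 = 0` in `ℝ≥0∞`. -/
def beta2Sq {n : ℕ} (μ : Measure (EuclideanSpace ℝ (Fin n)))
    (Q : Set (EuclideanSpace ℝ (Fin n))) : ℝ≥0∞ :=
  ⨅ (L : Set (EuclideanSpace ℝ (Fin n))) (_ : IsLine L),
    (∫⁻ x in Q, ENNReal.ofReal ((Metric.infDist x L / Metric.diam Q) ^ 2) ∂μ) / μ Q

/-- The beta number `β_E(Q) = inf_ℓ sup_{x ∈ E ∩ Q} dist(x,ℓ)/diam Q` of a set `E`;
it is `0` when `E ∩ Q = ∅`. -/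
def betaSet {n : ℕ} (E Q : Set (EuclideanSpace ℝ (Fin n))) : ℝ≥0∞ :=
  ⨅ (L : Set (EuclideanSpace ℝ (Fin n))) (_ : IsLine L),
    ⨆ x ∈ E ∩ Q, ENNReal.ofReal (Metric.infDist x L / Metric.diam Q)

-- The ordinary `L²` Jones function at scale `r`:
-- `J₂(μ,r,x) = Σ_Q β₂²(μ,3Q) χ_Q(x)` over dyadic cubes `Q` of side length at most `r`.
open Classical in
def jones2 {n : ℕ} (μ : Measure (EuclideanSpace ℝ (Fin n))) (r : ℝ)
    (x : EuclideanSpace ℝ (Fin n)) : ℝ≥0∞ :=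
  ∑' (k : ℤ) (z : Fin n → ℤ),
    if (2 : ℝ) ^ (-k) ≤ r ∧ x ∈ dyadicCube n k z then beta2Sq μ (dilatedCube n 3 k z) else 0

-- The density-normalized `L²` Jones function at scale `r`:
-- `J̃₂(μ,r,x) = Σ_Q β₂²(μ,3Q) (diam Q / μ(Q)) χ_Q(x)` over dyadic cubes `Q` of side length
-- at most `r`, with the convention `0/0 = 0` (the term vanishes when `μ Q = 0`).
open Classical in
def jones2Tilde {n : ℕ} (μ : Measure (EuclideanSpace ℝ (Fin n))) (r : ℝ)
    (x : EuclideanSpace ℝ (Fin n)) : ℝ≥0∞ :=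
  ∑' (k : ℤ) (z : Fin n → ℤ),
    if (2 : ℝ) ^ (-k) ≤ r ∧ x ∈ dyadicCube n k z then
      (if μ (dyadicCube n k z) = 0 then 0
       else beta2Sq μ (dilatedCube n 3 k z) * ENNReal.ofReal (Metric.diam (dyadicCube n k z))
              / μ (dyadicCube n k z))
    else 0

/-- A measure `μ` on `ℝⁿ` is `1`-rectifiable: countably many bounded Borel sets `Eᵢ ⊆ ℝ` and
Lipschitz maps `fᵢ : Eᵢ → ℝⁿ` whose images carry the full mass of `μ`. -/
def Is1Rectifiable {n : ℕ} (μ : Measure (EuclideanSpace ℝ (Fin n))) : Prop :=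
  ∃ (E : ℕ → Set ℝ) (f : ℕ → ℝ → EuclideanSpace ℝ (Fin n)),
    (∀ i, Bornology.IsBounded (E i) ∧ MeasurableSet (E i) ∧
      ∃ K : ℝ≥0, LipschitzOnWith K (f i) (E i)) ∧
    μ (Set.univ \ ⋃ i, f i '' E i) = 0

/-- A measure `μ` on `ℝⁿ` is `m`-rectifiable: countably many bounded Borel sets `Eᵢ ⊆ ℝᵐ` and
Lipschitz maps `fᵢ : Eᵢ → ℝⁿ` whose images carry the full mass of `μ`. -/
def IsMRectifiable (m : ℕ) {n : ℕ} (μ : Measure (EuclideanSpace ℝ (Fin n))) : Prop :=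
  ∃ (E : ℕ → Set (EuclideanSpace ℝ (Fin m)))
    (f : ℕ → EuclideanSpace ℝ (Fin m) → EuclideanSpace ℝ (Fin n)),
    (∀ i, Bornology.IsBounded (E i) ∧ MeasurableSet (E i) ∧
      ∃ K : ℝ≥0, LipschitzOnWith K (f i) (E i)) ∧
    μ (Set.univ \ ⋃ i, f i '' E i) = 0

/-- A rectifiable curve in `ℝⁿ`: the image of a Lipschitz map on a compact interval. -/
def IsRectifiableCurve {n : ℕ} (Γ : Set (EuclideanSpace ℝ (Fin n))) : Prop :=
  ∃ (f : ℝ → EuclideanSpace ℝ (Fin n)) (a b : ℝ) (K : ℝ≥0),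
    LipschitzOnWith K f (Set.Icc a b) ∧ Γ = f '' Set.Icc a b

/-- The lower Hausdorff `1`-density `Θ¹_*(μ,x) = liminf_{r→0⁺} μ(B(x,r))/(2r)`. -/
def lowerDensity1 {n : ℕ} (μ : Measure (EuclideanSpace ℝ (Fin n)))
    (x : EuclideanSpace ℝ (Fin n)) : ℝ≥0∞ :=
  Filter.liminf (fun r : ℝ => μ (Metric.closedBall x r) / ENNReal.ofReal (2 * r)) (𝓝[>] 0)

/-- The upper Hausdorff `1`-density `Θ*¹(μ,x) = limsup_{r→0⁺} μ(B(x,r))/(2r)`. -/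
def upperDensity1 {n : ℕ} (μ : Measure (EuclideanSpace ℝ (Fin n)))
    (x : EuclideanSpace ℝ (Fin n)) : ℝ≥0∞ :=
  Filter.limsup (fun r : ℝ => μ (Metric.closedBall x r) / ENNReal.ofReal (2 * r)) (𝓝[>] 0)

/-- The lower Hausdorff `m`-density `Θᵐ_*(μ,x) = liminf_{r→0⁺} μ(B(x,r))/(ω_m rᵐ)`, where
`ω_m` is the Lebesgue volume of the unit ball in `ℝᵐ`. -/
def lowerDensity (m : ℕ) {n : ℕ} (μ : Measure (EuclideanSpace ℝ (Fin n)))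
    (x : EuclideanSpace ℝ (Fin n)) : ℝ≥0∞ :=
  Filter.liminf
    (fun r : ℝ => μ (Metric.closedBall x r) /
      (MeasureTheory.volume (Metric.ball (0 : EuclideanSpace ℝ (Fin m)) 1) *
        ENNReal.ofReal (r ^ m)))
    (𝓝[>] 0)

/-- The `δ`-packing prenumber `P^s_δ(A)`: the supremum of `Σᵢ (2rᵢ)^s` over all countable
packings of `A` by disjoint closed balls centered in `A` of diameter at most `δ`. -/
def packingPreAt {X : Type*} [PseudoMetricSpace X] (s δ : ℝ) (A : Set X) : ℝ≥0∞ :=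
  ⨆ (S : Set (X × ℝ)) (_ : S.Countable)
    (_ : ∀ p ∈ S, p.1 ∈ A ∧ 0 < p.2 ∧ 2 * p.2 ≤ δ)
    (_ : S.Pairwise fun p q => Disjoint (Metric.closedBall p.1 p.2) (Metric.closedBall q.1 q.2)),
    ∑' p : S, ENNReal.ofReal ((2 * p.1.2) ^ s)

/-- The `s`-dimensional packing premeasure `P^s(A) = lim_{δ→0⁺} P^s_δ(A)`; since `P^s_δ(A)`
is nonincreasing in `δ`, the limit equals the infimum over `δ > 0`. -/
def packingPre {X : Type*} [PseudoMetricSpace X] (s : ℝ) (A : Set X) : ℝ≥0∞ :=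
  ⨅ (δ : ℝ) (_ : 0 < δ), packingPreAt s δ A

/-- The `s`-dimensional packing measure
`𝒫^s(A) = inf { Σᵢ P^s(Aᵢ) : A = ⋃ᵢ Aᵢ }`. -/
def packingMeasure {X : Type*} [PseudoMetricSpace X] (s : ℝ) (A : Set X) : ℝ≥0∞ :=
  ⨅ (F : ℕ → Set X) (_ : A = ⋃ i, F i), ∑' i, packingPre s (F i)

/-!
Split `μ` into the pieces carried by the Lipschitz images `f(E)`, `E ⊆ ℝᵐ` bounded, and fix
`t > 0`. Each `x ∈ f(E)` with `Θᵐ_*(μ,x) < t` is the centre of arbitrarily small balls with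
`μ(B(x,r)) < t ω_m rᵐ`, and the Besicovitch covering theorem selects disjoint such balls covering
`μ`-almost all of these points. If `f` is `K`-Lipschitz, preimages of the centres carry disjoint
balls of radii `r/(2K)` inside the `1`-neighbourhood `E₁` of `E`, so `Σ ω_m rᵐ ≤ (2K)ᵐ |E₁|` and
the set has measure at most `t (2K)ᵐ |E₁|`. Letting `t → 0` kills `{Θᵐ_* = 0} ∩ f(E)`.
-/

theorem lt_dist_of_disjoint_closedBall {X : Type*} [PseudoMetricSpace X] {x y : X} {r s : ℝ}
    (h : Disjoint (closedBall x r) (closedBall y s)) (hs : 0 ≤ s) : r < dist x y := by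
  have hy : y ∉ closedBall x r := Set.disjoint_right.mp h (mem_closedBall_self hs)
  simpa [mem_closedBall, dist_comm] using hy

theorem LipschitzOnWith.disjoint_ball_of_disjoint_closedBall {X Y : Type*} [PseudoMetricSpace X]
    [PseudoMetricSpace Y] {f : X → Y} {K : ℝ≥0} {E : Set X} (hf : LipschitzOnWith K f E)
    (hK : 0 < K) {a b : X} (ha : a ∈ E) (hb : b ∈ E) {r s : ℝ} (hr : 0 ≤ r) (hs : 0 ≤ s)
    (h : Disjoint (closedBall (f a) r) (closedBall (f b) s)) :
    Disjoint (ball a (r / (2 * K))) (ball b (s / (2 * K))) := by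
  have hr' : r < dist (f a) (f b) := lt_dist_of_disjoint_closedBall h hs
  have hs' : s < dist (f a) (f b) := by
    rw [dist_comm]; exact lt_dist_of_disjoint_closedBall h.symm hr
  have hlip : dist (f a) (f b) ≤ K * dist a b := hf.dist_le_mul a ha b hb
  apply ball_disjoint_ball
  rw [← add_div, div_le_iff₀ (by positivity)]
  nlinarith

theorem volume_ball_one_mul_ofReal_pow {m : ℕ} (y : EuclideanSpace ℝ (Fin m)) {r c : ℝ}
    (hr : 0 < r) (hc : 0 < c) :
    volume (ball (0 : EuclideanSpace ℝ (Fin m)) 1) * ENNReal.ofReal (r ^ m) =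
      ENNReal.ofReal (c ^ m) * volume (ball y (r / c)) := by
  rw [Measure.addHaar_ball_of_pos _ _ (div_pos hr hc), finrank_euclideanSpace_fin, ← mul_assoc,
    ← ENNReal.ofReal_mul (by positivity), ← mul_pow, mul_div_cancel₀ r hc.ne', mul_comm]

theorem LipschitzOnWith.tsum_volume_mul_rad_pow_le {m n : ℕ}
    {f : EuclideanSpace ℝ (Fin m) → EuclideanSpace ℝ (Fin n)} {K : ℝ≥0}
    {E : Set (EuclideanSpace ℝ (Fin m))} (hf : LipschitzOnWith K f E) (hK : 0 < K)
    {T : Set (EuclideanSpace ℝ (Fin n))} (hT : T ⊆ f '' E) (rad : EuclideanSpace ℝ (Fin n) → ℝ)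
    (hrad : ∀ x ∈ T, rad x ∈ Ioo 0 (2 * (K : ℝ)))
    (hdisj : T.PairwiseDisjoint fun x => closedBall x (rad x)) :
    ∑' x : T, volume (ball (0 : EuclideanSpace ℝ (Fin m)) 1) * ENNReal.ofReal (rad x ^ m) ≤
      ENNReal.ofReal ((2 * K) ^ m) * volume (cthickening 1 E) := by
  choose! y hyE hyf using fun x (hx : x ∈ T) => hT hx
  have hK2 : (0 : ℝ) < 2 * K := by positivity
  set B : T → Set (EuclideanSpace ℝ (Fin m)) := fun x => ball (y ↑x) (rad x / (2 * K))
  have hB_disj : Pairwise (Function.onFun Disjoint B) := by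
    intro x x' hxx'
    have h : Disjoint (closedBall (f (y x)) (rad x)) (closedBall (f (y x')) (rad x')) := by
      rw [hyf x x.2, hyf x' x'.2]
      exact hdisj x.2 x'.2 (Subtype.coe_ne_coe.mpr hxx')
    exact hf.disjoint_ball_of_disjoint_closedBall hK (hyE x x.2) (hyE x' x'.2)
      (hrad x x.2).1.le (hrad x' x'.2).1.le h
  have hB_sub : (⋃ x, B x) ⊆ cthickening 1 E := by
    refine iUnion_subset fun x z hz => ?_
    have hle : rad x / (2 * K) ≤ 1 := (div_le_one hK2).mpr (hrad x x.2).2.le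
    exact mem_cthickening_of_dist_le z (y x) 1 E (hyE x x.2)
      ((mem_ball.mp hz).le.trans hle)
  calc ∑' x : T, volume (ball (0 : EuclideanSpace ℝ (Fin m)) 1) * ENNReal.ofReal (rad x ^ m)
      = ENNReal.ofReal ((2 * K) ^ m) * ∑' x, volume (B x) := by
        rw [← ENNReal.tsum_mul_left]
        exact tsum_congr fun x => volume_ball_one_mul_ofReal_pow _ (hrad x x.2).1 hK2
    _ ≤ ENNReal.ofReal ((2 * K) ^ m) * volume (cthickening 1 E) := by
        gcongr
        exact (tsum_meas_le_meas_iUnion_of_disjoint _ (fun _ => measurableSet_ball) hB_disj).trans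
          (measure_mono hB_sub)

theorem frequently_measure_closedBall_lt_of_lowerDensity_lt {m n : ℕ}
    {μ : Measure (EuclideanSpace ℝ (Fin n))} {x : EuclideanSpace ℝ (Fin n)} {t : ℝ≥0∞}
    (h : lowerDensity m μ x < t) :
    ∃ᶠ r in 𝓝[>] (0 : ℝ), μ (closedBall x r) <
      t * (volume (ball (0 : EuclideanSpace ℝ (Fin m)) 1) * ENNReal.ofReal (r ^ m)) := by
  have hω : volume (ball (0 : EuclideanSpace ℝ (Fin m)) 1) ≠ 0 :=
    (measure_ball_pos _ _ one_pos).ne'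
  refine (frequently_lt_of_liminf_lt (by isBoundedDefault) h).mp ?_
  filter_upwards [self_mem_nhdsWithin] with r (hr : 0 < r) hlt
  rwa [ENNReal.div_lt_iff (Or.inl (mul_ne_zero hω (ENNReal.ofReal_pos.mpr (pow_pos hr m)).ne'))
    (Or.inl (ENNReal.mul_ne_top measure_ball_lt_top.ne ENNReal.ofReal_ne_top))] at hlt

theorem measure_lowerDensity_lt_inter_image_le {m n : ℕ} (μ : Measure (EuclideanSpace ℝ (Fin n)))
    [IsLocallyFiniteMeasure μ] {f : EuclideanSpace ℝ (Fin m) → EuclideanSpace ℝ (Fin n)}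
    {K : ℝ≥0} {E : Set (EuclideanSpace ℝ (Fin m))} (hf : LipschitzOnWith K f E) (hK : 0 < K)
    (t : ℝ≥0∞) :
    μ ({x | lowerDensity m μ x < t} ∩ f '' E) ≤
      t * (ENNReal.ofReal ((2 * K) ^ m) * volume (cthickening 1 E)) := by
  set ω := volume (ball (0 : EuclideanSpace ℝ (Fin m)) 1)
  set S := {x | lowerDensity m μ x < t} ∩ f '' E
  have hsmall : ∀ x ∈ S, ∀ δ > 0,
      ({r | μ (closedBall x r) ≤ t * (ω * ENNReal.ofReal (r ^ m))} ∩ Ioo 0 δ).Nonempty := by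
    intro x hx δ hδ
    obtain ⟨r, hr, hrδ⟩ := ((frequently_measure_closedBall_lt_of_lowerDensity_lt
      hx.1).and_eventually (Ioo_mem_nhdsGT hδ)).exists
    exact ⟨r, hr.le, hrδ⟩
  obtain ⟨T, rad, hTc, hTS, hrad, hcov, hdisj⟩ :=
    Besicovitch.exists_disjoint_closedBall_covering_ae μ _ S hsmall (fun _ => 2 * K)
      (fun _ _ => by positivity)
  calc μ S ≤ μ (⋃ x ∈ T, closedBall x (rad x)) := measure_mono_ae (ae_le_set.mpr hcov)
    _ ≤ ∑' x : T, μ (closedBall x (rad x)) := measure_biUnion_le μ hTc _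
    _ ≤ ∑' x : T, t * (ω * ENNReal.ofReal (rad x ^ m)) :=
        ENNReal.tsum_le_tsum fun x => (hrad x x.2).1
    _ = t * ∑' x : T, ω * ENNReal.ofReal (rad x ^ m) := ENNReal.tsum_mul_left
    _ ≤ t * (ENNReal.ofReal ((2 * K) ^ m) * volume (cthickening 1 E)) := by
        gcongr
        exact hf.tsum_volume_mul_rad_pow_le hK (hTS.trans inter_subset_right) rad
          (fun x hx => (hrad x hx).2) hdisj

theorem measure_lowerDensity_eq_zero_inter_image {m n : ℕ}
    (μ : Measure (EuclideanSpace ℝ (Fin n))) [IsLocallyFiniteMeasure μ]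
    {f : EuclideanSpace ℝ (Fin m) → EuclideanSpace ℝ (Fin n)} {K : ℝ≥0}
    {E : Set (EuclideanSpace ℝ (Fin m))} (hE : Bornology.IsBounded E)
    (hf : LipschitzOnWith K f E) :
    μ ({x | lowerDensity m μ x = 0} ∩ f '' E) = 0 := by
  set C := ENNReal.ofReal ((2 * (K + 1 : ℝ≥0)) ^ m) * volume (cthickening 1 E)
  have hC : C ≠ ∞ := ENNReal.mul_ne_top ENNReal.ofReal_ne_top hE.cthickening.measure_lt_top.ne
  have hle : ∀ t > 0, μ ({x | lowerDensity m μ x = 0} ∩ f '' E) ≤ t * C := by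
    intro t ht
    have hsub : {x | lowerDensity m μ x = 0} ⊆ {x | lowerDensity m μ x < t} :=
      fun x (hx : lowerDensity m μ x = 0) => show lowerDensity m μ x < t from hx ▸ ht
    exact (measure_mono (inter_subset_inter_left _ hsub)).trans
      (measure_lowerDensity_lt_inter_image_le μ (hf.weaken (le_add_of_nonneg_right zero_le_one))
        (add_pos_of_nonneg_of_pos zero_le one_pos) t)
  have hlim : Tendsto (fun t => t * C) (𝓝[>] 0) (𝓝 0) := by
    simpa using ENNReal.Tendsto.mul_const
      (tendsto_nhdsWithin_of_tendsto_nhds (tendsto_id (x := 𝓝 (0 : ℝ≥0∞)))) (Or.inr hC)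
  exact nonpos_iff_eq_zero.mp (ge_of_tendsto hlim (eventually_nhdsWithin_of_forall hle))

theorem lowerDensity_pos_ae_of_isMRectifiable_general (n m : ℕ)
    (μ : Measure (EuclideanSpace ℝ (Fin n))) [IsLocallyFiniteMeasure μ]
    (hμ : IsMRectifiable m μ) :
    ∀ᵐ x ∂μ, 0 < lowerDensity m μ x := by
  obtain ⟨E, f, hEf, hnull⟩ := hμ
  set N := {x | lowerDensity m μ x = 0}
  have hN : N ⊆ (univ \ ⋃ i, f i '' E i) ∪ ⋃ i, N ∩ f i '' E i := fun x hx => by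
    rw [← inter_iUnion]
    by_cases h : x ∈ ⋃ i, f i '' E i
    exacts [Or.inr ⟨hx, h⟩, Or.inl ⟨mem_univ x, h⟩]
  refine ae_iff.mpr (measure_mono_null (fun x hx => nonpos_iff_eq_zero.mp (not_lt.mp hx))
    (measure_mono_null hN (measure_union_null hnull (measure_iUnion_null fun i => ?_))))
  obtain ⟨hb, -, K, hK⟩ := hEf i
  exact measure_lowerDensity_eq_zero_inter_image μ hb hK

/-- If `μ` is a locally finite Borel measure on `ℝⁿ` which is
`m`-rectifiable (`m ≥ 1`), then the lower Hausdorff `m`-density satisfies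
`Θᵐ_*(μ,x) > 0` at `μ`-a.e. `x ∈ ℝⁿ`. -/
theorem lowerDensity_pos_ae_of_isMRectifiable (n m : ℕ) (hm : 1 ≤ m)
    (μ : Measure (EuclideanSpace ℝ (Fin n))) [IsLocallyFiniteMeasure μ]
    (hμ : IsMRectifiable m μ) :
    ∀ᵐ x ∂μ, 0 < lowerDensity m μ x :=
  lowerDensity_pos_ae_of_isMRectifiable_general n m μ hμ

end
end

section
/- Let s ≥ 0 and let μ be a locally finite Borel measure on ℝ^n. Then μ is absolutely continuous with respect to the s-dimensional Hausdorff measure H^s if and only if the upper Hausdorff s-density satisfies Θ*^s(μ,x) < ∞ at μ-almost every x ∈ ℝ^n. -/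
open MeasureTheory Metric Set Filter
open scoped ENNReal NNReal Topology

noncomputable section

/-!
If `μ(B(x, r)) ≤ c r^s` for all points `x` of a set `S` and all small `r`, then a set `T` of
small diameter `d` meeting `S` lies in `B(x, r)` for every `r > d`, so `μ(T ∩ S) ≤ c d^s`;
comparing with the covers that define `μH[s]` gives `μ S ≤ c μH[s] S`. Hence `μH[s]`-null sets
carry no mass where the density is finite.

Conversely, if the density is infinite on a set `S` inside an open set `U`, then for every `c`
each `x ∈ S` is the center of arbitrarily small balls `B(x, r) ⊆ U` with `μ(B(x, r)) ≥ c r^s`.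
A Vitali disjoint subfamily of these whose fourfold enlargements cover `S` gives
`c μH[s] S ≤ 8^s μ U`, and letting `c → ∞` with `μ U < ∞` shows that `μH[s] S = 0`.
-/

lemma ENNReal.ofReal_mul_rpow_of_pos {ω r : ℝ} (hω : 0 ≤ ω) (hr : 0 < r) (s : ℝ) :
    ENNReal.ofReal (ω * r ^ s) = ENNReal.ofReal ω * ENNReal.ofReal r ^ s := by
  rw [ENNReal.ofReal_mul hω, ENNReal.ofReal_rpow_of_pos hr]

section UpperDensity

variable {X : Type*} [PseudoMetricSpace X] [MeasurableSpace X]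

/-- The upper density `Θ*^s(μ, x)`, normalized by the constant `ω`. -/
def upperDensity (μ : Measure X) (s ω : ℝ) (x : X) : ℝ≥0∞ :=
  limsup (fun r : ℝ => μ (closedBall x r) / ENNReal.ofReal (ω * r ^ s)) (𝓝[>] 0)

variable {μ : Measure X} {s ω : ℝ} {x : X}

lemma exists_eventually_measure_closedBall_le_of_upperDensity_lt_top (hω : 0 ≤ ω)
    (hx : upperDensity μ s ω x < ⊤) :
    ∃ c ≠ ⊤, ∀ᶠ r in 𝓝[>] 0, μ (closedBall x r) ≤ c * ENNReal.ofReal r ^ s := by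
  obtain ⟨a, hxa, ha⟩ := exists_between hx
  refine ⟨a * ENNReal.ofReal ω, ENNReal.mul_ne_top ha.ne ENNReal.ofReal_ne_top, ?_⟩
  filter_upwards [eventually_lt_of_limsup_lt hxa, self_mem_nhdsWithin] with r hr (hr0 : 0 < r)
  rw [mul_assoc, ← ENNReal.ofReal_mul_rpow_of_pos hω hr0]
  exact (ENNReal.div_le_iff_le_mul (Or.inr ha.ne) (Or.inl ENNReal.ofReal_ne_top)).1 hr.le

lemma frequently_le_measure_closedBall_of_upperDensity_eq_top (hω : 0 < ω)
    (hx : upperDensity μ s ω x = ⊤) {c : ℝ≥0∞} (hc : c ≠ ⊤) :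
    ∃ᶠ r in 𝓝[>] 0, c * ENNReal.ofReal r ^ s ≤ μ (closedBall x r) := by
  have hω₀ : ENNReal.ofReal ω ≠ 0 := (ENNReal.ofReal_pos.2 hω).ne'
  have hlt : c / ENNReal.ofReal ω < upperDensity μ s ω x := hx ▸ ENNReal.div_lt_top hc hω₀
  refine (frequently_lt_of_lt_limsup (by isBoundedDefault) hlt).mp ?_
  filter_upwards [self_mem_nhdsWithin] with r (hr0 : 0 < r) hr
  rw [ENNReal.lt_div_iff_mul_lt (Or.inr (ENNReal.div_lt_top hc hω₀).ne)
      (Or.inl ENNReal.ofReal_ne_top),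
    ENNReal.ofReal_mul_rpow_of_pos hω.le hr0, ← mul_assoc,
    ENNReal.div_mul_cancel hω₀ ENNReal.ofReal_ne_top] at hr
  exact hr.le

end UpperDensity

section MeasureOfDensity

variable {X : Type*} [MetricSpace X] [MeasurableSpace X] {μ : Measure X} {s : ℝ}

lemma measure_inter_le_mul_ediam_rpow {S T : Set X} {c : ℝ≥0∞} (hc : c ≠ ⊤) {δ : ℝ}
    (h : ∀ x ∈ S, ∀ r ∈ Ioo 0 δ, μ (closedBall x r) ≤ c * ENNReal.ofReal r ^ s)
    (hT : ediam T < ENNReal.ofReal δ) : μ (T ∩ S) ≤ c * ediam T ^ s := by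
  rcases (T ∩ S).eq_empty_or_nonempty with hTS | ⟨x, hxT, hxS⟩
  · simp [hTS]
  have hT_ne_top : ediam T ≠ ⊤ := hT.ne_top
  set d := (ediam T).toReal
  have hbound : ∀ r ∈ Ioo d δ, μ (T ∩ S) ≤ c * ENNReal.ofReal r ^ s := fun r hr =>
    calc μ (T ∩ S) ≤ μ (closedBall x r) := measure_mono fun y hy => by
          rw [mem_closedBall, dist_edist]
          exact (ENNReal.toReal_mono hT_ne_top (edist_le_ediam_of_mem hy.1 hxT)).trans hr.1.le
      _ ≤ c * ENNReal.ofReal r ^ s := h x hxS r ⟨ENNReal.toReal_nonneg.trans_lt hr.1, hr.2⟩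
  have htendsto : Tendsto (fun r => c * ENNReal.ofReal r ^ s) (𝓝[>] d) (𝓝 (c * ediam T ^ s)) := by
    rw [← ENNReal.ofReal_toReal hT_ne_top]
    refine ENNReal.Tendsto.const_mul ?_ (Or.inr hc)
    exact ((ENNReal.continuous_rpow_const.comp ENNReal.continuous_ofReal).tendsto d).mono_left
      nhdsWithin_le_nhds
  exact ge_of_tendsto htendsto (eventually_of_mem (Ioo_mem_nhdsGT
    (ENNReal.toReal_lt_of_lt_ofReal hT)) hbound)

variable [BorelSpace X]

lemma measure_le_mul_hausdorffMeasure_of_forall_measure_closedBall_le {S : Set X}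
    {c : ℝ≥0∞} (hc : c ≠ ⊤) (hc₀ : c ≠ 0) {δ : ℝ} (hδ : 0 < δ)
    (h : ∀ x ∈ S, ∀ r ∈ Ioo 0 δ, μ (closedBall x r) ≤ c * ENNReal.ofReal r ^ s) :
    μ S ≤ c * μH[s] S := by
  have hle : μ.toOuterMeasure.restrict S ≤ OuterMeasure.mkMetric (c • fun d => d ^ s) := by
    refine OuterMeasure.le_mkMetric _ _ (ENNReal.ofReal (δ / 2)) (by positivity) fun T hT => ?_
    rw [OuterMeasure.restrict_apply]
    exact measure_inter_le_mul_ediam_rpow hc h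
      (hT.trans_lt ((ENNReal.ofReal_lt_ofReal_iff hδ).2 (half_lt_self hδ)))
  calc μ S = μ.toOuterMeasure.restrict S S := by
        rw [OuterMeasure.restrict_apply, inter_self, Measure.coe_toOuterMeasure]
    _ ≤ OuterMeasure.mkMetric (c • fun d => d ^ s) S := hle S
    _ = c * μH[s] S := by
        rw [OuterMeasure.mkMetric_smul _ hc hc₀, smul_apply,
          OuterMeasure.coe_mkMetric]
        rfl

theorem measure_le_mul_hausdorffMeasure_of_eventually_measure_closedBall_le {S : Set X}
    {c : ℝ≥0∞} (hc : c ≠ ⊤) (hc₀ : c ≠ 0)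
    (h : ∀ x ∈ S, ∀ᶠ r in 𝓝[>] 0, μ (closedBall x r) ≤ c * ENNReal.ofReal r ^ s) :
    μ S ≤ c * μH[s] S := by
  set S' : ℕ → Set X := fun k =>
    {x ∈ S | ∀ r ∈ Ioo 0 (1 / ((k : ℝ) + 1)), μ (closedBall x r) ≤ c * ENNReal.ofReal r ^ s}
  have hS : S ⊆ ⋃ k, S' k := fun x hx => by
    obtain ⟨ε, hε, hεx⟩ := mem_nhdsGT_iff_exists_Ioo_subset.1 (h x hx)
    obtain ⟨k, hk⟩ := exists_nat_one_div_lt (mem_Ioi.1 hε)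
    exact mem_iUnion.2 ⟨k, hx, fun r hr => hεx ⟨hr.1, hr.2.trans hk⟩⟩
  have hmono : Monotone S' := fun k l hkl x hx =>
    ⟨hx.1, fun r hr => hx.2 r ⟨hr.1, hr.2.trans_le (Nat.one_div_le_one_div hkl)⟩⟩
  calc μ S ≤ μ (⋃ k, S' k) := measure_mono hS
    _ = ⨆ k, μ (S' k) := hmono.measure_iUnion
    _ ≤ c * μH[s] S := iSup_le fun k =>
        (measure_le_mul_hausdorffMeasure_of_forall_measure_closedBall_le hc hc₀
          Nat.one_div_pos_of_nat fun x hx => hx.2).trans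
          (by gcongr; exact sep_subset _ _)

theorem absolutelyContinuous_hausdorffMeasure_of_ae_eventually_measure_closedBall_le
    (h : ∀ᵐ x ∂μ, ∃ c ≠ ⊤, ∀ᶠ r in 𝓝[>] 0, μ (closedBall x r) ≤ c * ENNReal.ofReal r ^ s) :
    μ ≪ μH[s] := by
  intro A hA
  set G : ℕ → Set X := fun N =>
    {x | ∀ᶠ r in 𝓝[>] 0, μ (closedBall x r) ≤ (N + 1) * ENNReal.ofReal r ^ s}
  have hG : ∀ N, μ (A ∩ G N) = 0 := fun N => by
    refine le_antisymm ?_ zero_le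
    calc μ (A ∩ G N) ≤ (N + 1) * μH[s] (A ∩ G N) :=
          measure_le_mul_hausdorffMeasure_of_eventually_measure_closedBall_le (by simp) (by simp)
            fun x hx => hx.2
      _ ≤ (N + 1) * μH[s] A := by gcongr; exact inter_subset_left
      _ = 0 := by rw [hA, mul_zero]
  refine measure_mono_null (fun x hx => ?_) (measure_union_null (measure_iUnion_null hG)
    (ae_iff.1 h))
  by_cases hx' : ∃ c ≠ ⊤, ∀ᶠ r in 𝓝[>] 0, μ (closedBall x r) ≤ c * ENNReal.ofReal r ^ s
  · obtain ⟨c, hc, hev⟩ := hx'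
    obtain ⟨N, hN⟩ := ENNReal.exists_nat_gt hc
    refine Or.inl (mem_iUnion.2 ⟨N, hx, hev.mono fun r hr => hr.trans ?_⟩)
    gcongr
    exact hN.le.trans le_self_add
  · exact Or.inr hx'

end MeasureOfDensity

lemma ediam_closedBall_le {X : Type*} [PseudoMetricSpace X] (x : X) (r : ℝ) :
    ediam (closedBall x r) ≤ ENNReal.ofReal (2 * r) :=
  ediam_le_of_forall_dist_le fun a ha b hb =>
    (dist_triangle_right a b x).trans (by linarith [mem_closedBall.1 ha, mem_closedBall.1 hb])

theorem Vitali.exists_countable_disjoint_closedBall_covering_of_frequently {X : Type*}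
    [PseudoMetricSpace X] [TopologicalSpace.SeparableSpace X] {S : Set X} {P : X → ℝ → Prop}
    (hP : ∀ x ∈ S, ∃ᶠ r in 𝓝[>] 0, P x r) {δ : ℝ} (hδ : 0 < δ) :
    ∃ (u : Set X) (ρ : X → ℝ), u ⊆ S ∧ u.Countable ∧ (∀ x ∈ u, ρ x ∈ Ioc 0 δ ∧ P x (ρ x)) ∧
      u.PairwiseDisjoint (fun x => closedBall x (ρ x)) ∧
      S ⊆ ⋃ x ∈ u, closedBall x (4 * ρ x) := by
  have : ∀ x ∈ S, ∃ r, r ∈ Ioc 0 δ ∧ P x r := fun x hx =>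
    ((hP x hx).and_eventually (Ioc_mem_nhdsGT hδ)).exists.imp fun r hr => ⟨hr.2, hr.1⟩
  choose! ρ hρ using this
  obtain ⟨u, huS, hdisj, hcov⟩ := Vitali.exists_disjoint_subfamily_covering_enlargement_closedBall
    S id ρ δ (fun x hx => (hρ x hx).1.2) 4 (by norm_num)
  have hu : u.Countable := hdisj.countable_of_nonempty_interior fun x hx =>
    ⟨x, mem_interior.2 ⟨ball x (ρ x), ball_subset_closedBall, isOpen_ball,
      mem_ball_self (hρ x (huS hx)).1.1⟩⟩
  refine ⟨u, ρ, huS, hu, fun x hx => hρ x (huS hx), hdisj, fun x hx => ?_⟩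
  obtain ⟨b, hb, hsub⟩ := hcov x hx
  exact mem_biUnion hb (hsub (mem_closedBall_self (hρ x hx).1.1.le))

section VitaliCovering

variable {X : Type*} [MetricSpace X] [MeasurableSpace X] [BorelSpace X] {μ : Measure X} {s : ℝ}

lemma mul_tsum_ediam_closedBall_rpow_le (hs : 0 ≤ s) {u U : Set X} (hu : u.Countable)
    {ρ : X → ℝ} {c : ℝ≥0∞}
    (hρ : ∀ x ∈ u, c * ENNReal.ofReal (ρ x) ^ s ≤ μ (closedBall x (ρ x)) ∧
      closedBall x (ρ x) ⊆ U)
    (hdisj : u.PairwiseDisjoint fun x => closedBall x (ρ x)) :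
    c * ∑' x : u, ediam (closedBall (x : X) (4 * ρ x)) ^ s ≤ 8 ^ s * μ U := by
  have := hu.to_subtype
  have hterm : ∀ x : u, c * ediam (closedBall (x : X) (4 * ρ x)) ^ s ≤
      8 ^ s * μ (closedBall (x : X) (ρ x)) := fun x =>
    calc c * ediam (closedBall (x : X) (4 * ρ x)) ^ s ≤ c * ENNReal.ofReal (8 * ρ x) ^ s := by
          gcongr
          exact (ediam_closedBall_le _ _).trans_eq (by ring_nf)
      _ ≤ 8 ^ s * (c * ENNReal.ofReal (ρ x) ^ s) := by
          rw [ENNReal.ofReal_mul (by norm_num), ENNReal.mul_rpow_of_nonneg _ _ hs,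
            ENNReal.ofReal_ofNat, mul_left_comm]
      _ ≤ 8 ^ s * μ (closedBall (x : X) (ρ x)) := by gcongr; exact (hρ x x.2).1
  calc c * ∑' x : u, ediam (closedBall (x : X) (4 * ρ x)) ^ s
      = ∑' x : u, c * ediam (closedBall (x : X) (4 * ρ x)) ^ s := ENNReal.tsum_mul_left.symm
    _ ≤ ∑' x : u, 8 ^ s * μ (closedBall (x : X) (ρ x)) := ENNReal.tsum_le_tsum hterm
    _ = 8 ^ s * μ (⋃ x : u, closedBall (x : X) (ρ x)) := by
        rw [ENNReal.tsum_mul_left, measure_iUnion hdisj.subtype fun _ => measurableSet_closedBall]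
    _ ≤ 8 ^ s * μ U := by gcongr; exact iUnion_subset fun x => (hρ x x.2).2

theorem mul_hausdorffMeasure_le_of_frequently_le_measure_closedBall
    [TopologicalSpace.SeparableSpace X] (hs : 0 ≤ s) {S U : Set X} (hU : IsOpen U)
    (hSU : S ⊆ U) {c : ℝ≥0∞} (hc : c ≠ ⊤)
    (h : ∀ x ∈ S, ∃ᶠ r in 𝓝[>] 0, c * ENNReal.ofReal r ^ s ≤ μ (closedBall x r)) :
    c * μH[s] S ≤ 8 ^ s * μ U := by
  rcases eq_or_ne c 0 with rfl | hc₀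
  · simp
  have hP : ∀ x ∈ S, ∃ᶠ r in 𝓝[>] 0,
      c * ENNReal.ofReal r ^ s ≤ μ (closedBall x r) ∧ closedBall x r ⊆ U := fun x hx =>
    (h x hx).and_eventually
      ((eventually_closedBall_subset (hU.mem_nhds (hSU hx))).filter_mono nhdsWithin_le_nhds)
  choose u ρ huS hu hρ hdisj hcov using fun k : ℕ =>
    Vitali.exists_countable_disjoint_closedBall_covering_of_frequently hP
      (Nat.one_div_pos_of_nat (n := k))
  have := fun k => (hu k).to_subtype
  have hcover : μH[s] S ≤
      liminf (fun k => ∑' x : u k, ediam (closedBall (x : X) (4 * ρ k x)) ^ s) atTop := by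
    refine Measure.hausdorffMeasure_le_liminf_tsum s S (l := atTop)
      (fun k : ℕ => ENNReal.ofReal (8 * (1 / ((k : ℝ) + 1))))
      ?_ _ (Eventually.of_forall fun k x => ?_) (Eventually.of_forall fun k => ?_)
    · simpa using ENNReal.tendsto_ofReal
        (tendsto_one_div_add_atTop_nhds_zero_nat.const_mul (8 : ℝ))
    · exact (ediam_closedBall_le _ _).trans (ENNReal.ofReal_le_ofReal (by
        linarith [(hρ k x x.2).1.2]))
    · exact (hcov k).trans (iUnion₂_subset fun x hx => subset_iUnion_of_subset ⟨x, hx⟩ le_rfl)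
  have hsum : ∀ k, ∑' x : u k, ediam (closedBall (x : X) (4 * ρ k x)) ^ s ≤ 8 ^ s * μ U / c :=
    fun k => (ENNReal.le_div_iff_mul_le (Or.inl hc₀) (Or.inl hc)).2 <| by
      rw [mul_comm]
      exact mul_tsum_ediam_closedBall_rpow_le hs (hu k) (fun x hx => (hρ k x hx).2) (hdisj k)
  calc c * μH[s] S ≤ c * (8 ^ s * μ U / c) := by
        gcongr
        exact hcover.trans (liminf_le_of_frequently_le' (Frequently.of_forall hsum))
    _ ≤ 8 ^ s * μ U := ENNReal.mul_div_le

theorem hausdorffMeasure_eq_zero_of_frequently_le_measure_closedBall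
    [TopologicalSpace.SeparableSpace X] (hs : 0 ≤ s) {S U : Set X} (hU : IsOpen U)
    (hμU : μ U ≠ ⊤) (hSU : S ⊆ U)
    (h : ∀ x ∈ S, ∀ c ≠ ⊤, ∃ᶠ r in 𝓝[>] 0, c * ENNReal.ofReal r ^ s ≤ μ (closedBall x r)) :
    μH[s] S = 0 := by
  by_contra hne
  obtain ⟨n, hn⟩ := ENNReal.exists_nat_mul_gt hne
    (ENNReal.mul_ne_top (ENNReal.rpow_ne_top_of_nonneg hs (by norm_num : (8 : ℝ≥0∞) ≠ ⊤)) hμU)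
  exact (mul_hausdorffMeasure_le_of_frequently_le_measure_closedBall hs hU hSU
    (ENNReal.natCast_ne_top n) fun x hx => h x hx n (ENNReal.natCast_ne_top n)).not_gt hn

end VitaliCovering

theorem hausdorffMeasure_setOf_upperDensity_eq_top {X : Type*} [MetricSpace X]
    [MeasurableSpace X] [BorelSpace X] [SecondCountableTopology X]
    {s ω : ℝ} (hs : 0 ≤ s) (hω : 0 < ω) (μ : Measure X) [IsLocallyFiniteMeasure μ] :
    μH[s] {x | upperDensity μ s ω x = ⊤} = 0 := by
  let F := μ.finiteSpanningSetsInOpen'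
  have hsplit : {x | upperDensity μ s ω x = ⊤} = ⋃ i, {x | upperDensity μ s ω x = ⊤} ∩ F.set i := by
    rw [← inter_iUnion, F.spanning, inter_univ]
  rw [hsplit]
  exact measure_iUnion_null fun i =>
    hausdorffMeasure_eq_zero_of_frequently_le_measure_closedBall hs (F.set_mem i) (F.finite i).ne
      inter_subset_right fun x hx _ hc =>
        frequently_le_measure_closedBall_of_upperDensity_eq_top hω hx.1 hc

/-- Let `s ≥ 0`, let `ω_s > 0` be a normalizing constant, and let `μ` be a
locally finite Borel measure on `ℝⁿ`. Then `μ ≪ H^s` iff the upper Hausdorff `s`-density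
`Θ*^s(μ,x) = limsup_{r→0⁺} μ(B(x,r))/(ω_s r^s)` is finite at `μ`-a.e. `x ∈ ℝⁿ`. -/
theorem absolutelyContinuous_hausdorff_iff_upperDensity_lt_top_ae (n : ℕ) (s : ℝ)
    (hs : 0 ≤ s) (ω : ℝ) (hω : 0 < ω)
    (μ : Measure (EuclideanSpace ℝ (Fin n))) [IsLocallyFiniteMeasure μ] :
    μ ≪ μH[s] ↔
      ∀ᵐ x ∂μ,
        Filter.limsup
            (fun r : ℝ => μ (Metric.closedBall x r) / ENNReal.ofReal (ω * r ^ s)) (𝓝[>] 0)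
          < ⊤ := by
  refine ⟨fun hμ => ?_, fun hμ => ?_⟩
  · have hnull := hμ (hausdorffMeasure_setOf_upperDensity_eq_top hs hω μ)
    filter_upwards [measure_eq_zero_iff_ae_notMem.1 hnull] with x hx
    exact lt_top_iff_ne_top.2 hx
  · refine absolutelyContinuous_hausdorffMeasure_of_ae_eventually_measure_closedBall_le ?_
    filter_upwards [hμ] with x hx
    exact exists_eventually_measure_closedBall_le_of_upperDensity_lt_top hω.le hx

end
end

section
/- Let n ≥ 2, let ν be a finite Borel measure on ℝ^n, let Γ ⊂ ℝ^n be a rectifiable curve, and let Q be a cube with Q ∩ Γ ≠ ∅ and ν(Q) > 0. Let a = 3 + 6√n and suppose ε > 0 satisfies 3(2/3)²a²ε² ≤ 1/2. If β_Γ(aQ) < ε β₂(ν,3Q), then β₂(ν,3Q)² ≤ 4 ∫_F (dist(x,Γ)/diam 3Q)² dν(x)/ν(3Q), where F = {x ∈ 3Q : dist(x,ℓ) > (2/3)aε β₂(ν,3Q) diam 3Q} for any line ℓ achieving sup_{z ∈ Γ∩aQ} dist(z,ℓ) ≤ 2β_Γ(aQ) diam aQ. -/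
open MeasureTheory Metric Set Filter
open scoped ENNReal NNReal Topology

noncomputable section

/-!
Let `D = diam 3Q`, `b = β₂(ν,3Q)` and `T = (2/3) a ε b D`. The hypothesis on `β_Γ(aQ)` puts
`Γ ∩ aQ` within `T` of `ℓ`. A point `x ∈ 3Q` has a point of `Γ` at distance at most `2 sQ √n`
(any point of `Γ ∩ Q`), and `a` is chosen so that all such nearby points of `Γ` lie in `aQ`;
hence `dist(x,ℓ) ≤ dist(x,Γ) + T` on `3Q`. Testing `β₂(ν,3Q)²` against `ℓ` and splitting `3Q`
into `F = {dist(·,ℓ) > T}` and its complement gives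
`b² ≤ 2 ∫_F (dist(x,Γ)/D)² dν/ν(3Q) + 3 (T/D)²`, and the choice of `ε` makes `3 (T/D)² ≤ b²/2`.
-/

lemma ENNReal.le_two_mul_of_le_add_half {a b : ℝ≥0∞} (ha : a ≠ ⊤) (h : a ≤ b + a / 2) :
    a ≤ 2 * b := by
  have hhalf : a / 2 ≤ b :=
    ENNReal.le_of_add_le_add_right (ENNReal.div_ne_top ha two_ne_zero)
      ((ENNReal.add_halves a).trans_le h)
  calc a = a / 2 + a / 2 := (ENNReal.add_halves a).symm
    _ ≤ b + b := add_le_add hhalf hhalf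
    _ = 2 * b := (two_mul b).symm

lemma ENNReal.exists_eq_ofReal_sq {x : ℝ≥0∞} (hx : x ≠ ⊤) :
    ∃ b : ℝ, 0 ≤ b ∧ x = ENNReal.ofReal (b ^ 2) ∧ x ^ (1 / 2 : ℝ) = ENNReal.ofReal b := by
  refine ⟨√x.toReal, Real.sqrt_nonneg _, ?_, ?_⟩
  · rw [Real.sq_sqrt ENNReal.toReal_nonneg, ENNReal.ofReal_toReal hx]
  · rw [Real.sqrt_eq_rpow, ← ENNReal.ofReal_rpow_of_nonneg ENNReal.toReal_nonneg (by norm_num),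
      ENNReal.ofReal_toReal hx]

-- `κ * D / D` is `κ` only when `D ≠ 0`.
lemma three_mul_ofReal_sq_mul_div_self_le {κ D B : ℝ} (hκ : 0 ≤ κ) (hD : 0 ≤ D)
    (h : 3 * κ ^ 2 ≤ B / 2) :
    3 * ENNReal.ofReal ((κ * D / D) ^ 2) ≤ ENNReal.ofReal B / 2 := by
  have hκD : 0 ≤ κ * D / D ∧ κ * D / D ≤ κ := by
    rw [mul_div_assoc]
    exact ⟨mul_nonneg hκ (div_nonneg hD hD), mul_le_of_le_one_right hκ (div_self_le_one D)⟩
  rw [← ENNReal.ofReal_ofNat 2, ← ENNReal.ofReal_div_of_pos two_pos, ← ENNReal.ofReal_ofNat 3,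
    ← ENNReal.ofReal_mul (by norm_num)]
  exact ENNReal.ofReal_le_ofReal <|
    (mul_le_mul_of_nonneg_left (pow_le_pow_left₀ hκD.1 hκD.2 2) (by norm_num)).trans h

lemma sq_div_le_two_mul_sq_div_add {f g T D : ℝ} (hf : 0 ≤ f) (hfg : f ≤ g + T) :
    (f / D) ^ 2 ≤ 2 * (g / D) ^ 2 + 2 * (T / D) ^ 2 := by
  simp only [div_pow, ← mul_div_assoc, ← add_div]
  gcongr
  nlinarith [mul_le_mul hfg hfg hf (hf.trans hfg), sq_nonneg (g - T)]

lemma Metric.infDist_le_infDist_add_of_forall_near {X : Type*} [PseudoMetricSpace X]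
    {A B : Set X} {x z : X} {T : ℝ} (hz : z ∈ A)
    (hB : ∀ y ∈ A, dist x y ≤ dist x z → infDist y B ≤ T) :
    infDist x B ≤ infDist x A + T := by
  have hA : ∀ y ∈ A, infDist x B - T ≤ dist x y := by
    intro y hy
    rcases le_total (dist x y) (dist x z) with hyz | hzy
    · linarith [infDist_le_infDist_add_dist (x := x) (y := y) (s := B), hB y hy hyz]
    · linarith [infDist_le_infDist_add_dist (x := x) (y := z) (s := B), hB z hz le_rfl]
  linarith [(le_infDist ⟨z, hz⟩).2 hA]

section SetLIntegral

variable {X : Type*} [MeasurableSpace X] {μ : Measure X}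

lemma setLIntegral_div_measure_le_of_forall_le {S : Set X} {f : X → ℝ≥0∞} {C : ℝ≥0∞}
    (h : ∀ x ∈ S, f x ≤ C) : (∫⁻ x in S, f x ∂μ) / μ S ≤ C :=
  ENNReal.div_le_of_le_mul <| (setLIntegral_mono measurable_const h).trans_eq
    (setLIntegral_const S C)

lemma setLIntegral_sq_div_div_measure_le {S : Set X} {f g : X → ℝ} (hg : Measurable g)
    {T D : ℝ} (hf : ∀ x ∈ S, 0 ≤ f x) (hfg : ∀ x ∈ S, f x ≤ g x + T) :
    (∫⁻ x in S, ENNReal.ofReal ((f x / D) ^ 2) ∂μ) / μ S ≤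
      2 * (∫⁻ x in {x ∈ S | T < f x}, ENNReal.ofReal ((g x / D) ^ 2) ∂μ) / μ S +
        3 * ENNReal.ofReal ((T / D) ^ 2) := by
  set F := {x ∈ S | T < f x}
  set J := ∫⁻ x in F, ENNReal.ofReal ((g x / D) ^ 2) ∂μ
  set C := ENNReal.ofReal ((T / D) ^ 2)
  have hF : ∫⁻ x in F, ENNReal.ofReal ((f x / D) ^ 2) ∂μ ≤ 2 * J + 2 * C * μ S := calc
    _ ≤ ∫⁻ x in F, (2 * ENNReal.ofReal ((g x / D) ^ 2) + 2 * C) ∂μ := by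
      refine setLIntegral_mono (by fun_prop) fun x hx => ?_
      rw [← ENNReal.ofReal_ofNat 2, ← ENNReal.ofReal_mul zero_le_two,
        ← ENNReal.ofReal_mul zero_le_two, ← ENNReal.ofReal_add (by positivity) (by positivity)]
      exact ENNReal.ofReal_le_ofReal (sq_div_le_two_mul_sq_div_add (hf x hx.1) (hfg x hx.1))
    _ = 2 * J + 2 * C * μ F := by
      rw [lintegral_add_right _ measurable_const, lintegral_const_mul' _ _ ENNReal.ofNat_ne_top,
        setLIntegral_const]
    _ ≤ 2 * J + 2 * C * μ S := by gcongr; exact sep_subset _ _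
  have hFc : ∫⁻ x in S \ F, ENNReal.ofReal ((f x / D) ^ 2) ∂μ ≤ C * μ S := calc
    _ ≤ ∫⁻ _ in S \ F, C ∂μ := by
      refine setLIntegral_mono measurable_const fun x hx => ENNReal.ofReal_le_ofReal ?_
      have hfT : f x ≤ T := not_lt.mp fun h => hx.2 ⟨hx.1, h⟩
      simp only [div_pow]
      gcongr
      exact hf x hx.1
    _ = C * μ (S \ F) := setLIntegral_const _ _
    _ ≤ C * μ S := by gcongr; exact sdiff_subset
  have hS : ∫⁻ x in S, ENNReal.ofReal ((f x / D) ^ 2) ∂μ ≤ 2 * J + 3 * C * μ S := calc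
    _ ≤ ∫⁻ x in F ∪ S \ F, ENNReal.ofReal ((f x / D) ^ 2) ∂μ :=
      lintegral_mono_set (union_sdiff_cancel (sep_subset _ _)).superset
    _ ≤ _ := lintegral_union_le _ _ _
    _ ≤ 2 * J + 2 * C * μ S + C * μ S := add_le_add hF hFc
    _ = 2 * J + 3 * C * μ S := by ring
  calc _ ≤ (2 * J + 3 * C * μ S) / μ S := by gcongr
    _ = 2 * J / μ S + 3 * C * μ S / μ S := ENNReal.add_div
    _ ≤ 2 * J / μ S + 3 * C := by gcongr; exact ENNReal.div_le_of_le_mul le_rfl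

end SetLIntegral

section AxisCube

variable {n : ℕ}

lemma abs_sub_apply_le_dist (x y : EuclideanSpace ℝ (Fin n)) (i : Fin n) :
    |x i - y i| ≤ dist x y := by
  simpa only [Real.dist_eq] using PiLp.dist_apply_le x y i

lemma dist_le_mul_sqrt_of_forall_abs_sub_le {x y : EuclideanSpace ℝ (Fin n)} {r : ℝ}
    (hr : 0 ≤ r) (h : ∀ i, |x i - y i| ≤ r) : dist x y ≤ r * √n := by
  rw [EuclideanSpace.dist_eq, ← Real.sqrt_sq hr, ← Real.sqrt_mul' _ (Nat.cast_nonneg n)]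
  refine Real.sqrt_le_sqrt ?_
  calc ∑ i, dist (x i) (y i) ^ 2 ≤ ∑ _i : Fin n, r ^ 2 :=
        Finset.sum_le_sum fun i _ => by
          rw [Real.dist_eq]; exact pow_le_pow_left₀ (abs_nonneg _) (h i) 2
    _ = r ^ 2 * n := by simp [mul_comm]

lemma dist_le_of_mem_axisCube {c x y : EuclideanSpace ℝ (Fin n)} {s t : ℝ} (hs : 0 ≤ s)
    (ht : 0 ≤ t) (hx : x ∈ axisCube c s) (hy : y ∈ axisCube c t) :
    dist x y ≤ (s + t) / 2 * √n :=
  dist_le_mul_sqrt_of_forall_abs_sub_le (by positivity) fun i => by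
    have hxi := abs_le.mp (hx i)
    have hyi := abs_le.mp (hy i)
    exact abs_le.mpr ⟨by linarith, by linarith⟩

lemma mem_axisCube_of_dist_le {c x y : EuclideanSpace ℝ (Fin n)} {s r : ℝ}
    (hx : x ∈ axisCube c s) (hxy : dist x y ≤ r) : y ∈ axisCube c (s + 2 * r) := fun i => by
  have hxi := abs_le.mp (hx i)
  have hxyi := abs_le.mp ((abs_sub_apply_le_dist x y i).trans hxy)
  exact abs_le.mpr ⟨by linarith, by linarith⟩

lemma axisCube_mono (c : EuclideanSpace ℝ (Fin n)) {s t : ℝ} (h : s ≤ t) :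
    axisCube c s ⊆ axisCube c t := fun x hx i => (hx i).trans (by linarith)

lemma isBounded_axisCube (c : EuclideanSpace ℝ (Fin n)) (s : ℝ) :
    Bornology.IsBounded (axisCube c s) :=
  isBounded_closedBall.subset fun x hx => mem_closedBall.mpr <|
    dist_le_mul_sqrt_of_forall_abs_sub_le (r := |s| / 2) (by positivity) fun i =>
      (hx i).trans (by linarith [le_abs_self s])

lemma diam_axisCube (c : EuclideanSpace ℝ (Fin n)) {s : ℝ} (hs : 0 ≤ s) :
    diam (axisCube c s) = s * √n := by
  refine le_antisymm (diam_le_of_forall_dist_le (by positivity) fun x hx y hy =>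
    (dist_le_of_mem_axisCube hs hs hx hy).trans_eq (by ring)) ?_
  set u : EuclideanSpace ℝ (Fin n) := WithLp.toLp 2 fun _ => s / 2
  have hu : ∀ i, u i = s / 2 := fun _ => rfl
  have hs2 : |s / 2| = s / 2 := abs_of_nonneg (by positivity)
  have hplus : c + u ∈ axisCube c s := fun i => by simp [hu, hs2]
  have hminus : c - u ∈ axisCube c s := fun i => by simp [hu, hs2]
  calc s * √n = √(∑ _i : Fin n, s ^ 2) := by
        simp [Real.sqrt_mul (Nat.cast_nonneg n), Real.sqrt_sq hs, mul_comm]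
    _ = dist (c + u) (c - u) := by
        simp only [EuclideanSpace.dist_eq, Real.dist_eq, PiLp.add_apply, PiLp.sub_apply, hu,
          add_sub_sub_cancel, add_halves, sq_abs]
    _ ≤ diam (axisCube c s) := dist_le_diam_of_mem (isBounded_axisCube c s) hplus hminus

lemma infDist_le_infDist_add_of_mem_axisCube {c x z : EuclideanSpace ℝ (Fin n)}
    {Γ L : Set (EuclideanSpace ℝ (Fin n))} {s a T : ℝ} (hs : 0 ≤ s) (ha : 3 + 4 * √n ≤ a)
    (hz : z ∈ axisCube c s ∩ Γ) (hΓL : ∀ y ∈ Γ ∩ axisCube c (a * s), infDist y L ≤ T)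
    (hx : x ∈ axisCube c (3 * s)) : infDist x L ≤ infDist x Γ + T :=
  infDist_le_infDist_add_of_forall_near hz.2 fun y hy hxy => hΓL y ⟨hy, axisCube_mono c
    (by nlinarith [mul_le_mul_of_nonneg_right ha hs])
    (mem_axisCube_of_dist_le hx
      (hxy.trans (dist_le_of_mem_axisCube (by positivity) hs hx hz.1)))⟩

end AxisCube

lemma beta2Sq_ne_top {n : ℕ} (μ : Measure (EuclideanSpace ℝ (Fin n)))
    {Q L : Set (EuclideanSpace ℝ (Fin n))} (hQ : Bornology.IsBounded Q) (hL : IsLine L) :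
    beta2Sq μ Q ≠ ⊤ := by
  obtain ⟨p, hp⟩ : L.Nonempty := by
    obtain ⟨p, v, -, rfl⟩ := hL
    exact ⟨p, 0, by simp⟩
  obtain ⟨R, hR⟩ := hQ.subset_closedBall p
  refine ne_top_of_le_ne_top ENNReal.ofReal_ne_top ((iInf₂_le L hL).trans
    (setLIntegral_div_measure_le_of_forall_le (C := ENNReal.ofReal ((R / diam Q) ^ 2))
      fun x hx => ENNReal.ofReal_le_ofReal ?_))
  have hxL : infDist x L ≤ R := (infDist_le_dist_of_mem hp).trans (mem_closedBall.mp (hR hx))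
  exact pow_le_pow_left₀ (div_nonneg infDist_nonneg diam_nonneg)
    (div_le_div_of_nonneg_right hxL diam_nonneg) 2

lemma infDist_le_of_betaSet_le {n : ℕ} {E Q L : Set (EuclideanSpace ℝ (Fin n))} {δ : ℝ}
    (hδ : 0 ≤ δ) (hβ : betaSet E Q ≤ ENNReal.ofReal δ)
    (hL : ∀ z ∈ E ∩ Q, ENNReal.ofReal (infDist z L) ≤ 2 * betaSet E Q * ENNReal.ofReal (diam Q))
    {z : EuclideanSpace ℝ (Fin n)} (hz : z ∈ E ∩ Q) : infDist z L ≤ 2 * δ * diam Q := by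
  rw [← ENNReal.ofReal_le_ofReal_iff (by positivity), ENNReal.ofReal_mul (by positivity),
    ENNReal.ofReal_mul zero_le_two, ENNReal.ofReal_ofNat]
  exact (hL z hz).trans (by gcongr)

theorem beta2Sq_le_four_lintegral_general (n : ℕ)
    (ν : Measure (EuclideanSpace ℝ (Fin n)))
    (Γ : Set (EuclideanSpace ℝ (Fin n)))
    (c : EuclideanSpace ℝ (Fin n)) (sQ : ℝ) (hsQ : 0 < sQ)
    (hQΓ : (axisCube c sQ ∩ Γ).Nonempty)
    (a ε : ℝ) (ha : a = 3 + 6 * Real.sqrt n) (hε : 0 < ε)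
    (hε2 : 3 * (2 / 3) ^ 2 * a ^ 2 * ε ^ 2 ≤ 1 / 2)
    (hβ : betaSet Γ (axisCube c (a * sQ)) <
      ENNReal.ofReal ε * beta2Sq ν (axisCube c (3 * sQ)) ^ (1 / 2 : ℝ))
    (L : Set (EuclideanSpace ℝ (Fin n))) (hL : IsLine L)
    (hLsup : ∀ z ∈ Γ ∩ axisCube c (a * sQ),
      ENNReal.ofReal (Metric.infDist z L) ≤
        2 * betaSet Γ (axisCube c (a * sQ)) *
          ENNReal.ofReal (Metric.diam (axisCube c (a * sQ)))) :
    beta2Sq ν (axisCube c (3 * sQ)) ≤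
      4 * (∫⁻ x in {x ∈ axisCube c (3 * sQ) |
              ENNReal.ofReal ((2 / 3) * a * ε) * beta2Sq ν (axisCube c (3 * sQ)) ^ (1 / 2 : ℝ) *
                  ENNReal.ofReal (Metric.diam (axisCube c (3 * sQ)))
                < ENNReal.ofReal (Metric.infDist x L)},
            ENNReal.ofReal ((Metric.infDist x Γ / Metric.diam (axisCube c (3 * sQ))) ^ 2) ∂ν)
          / ν (axisCube c (3 * sQ)) := by
  obtain ⟨z₀, hz₀⟩ := hQΓ
  obtain ⟨b, hb, hβb, hβsqrt⟩ :=
    ENNReal.exists_eq_ofReal_sq (beta2Sq_ne_top ν (isBounded_axisCube c _) hL)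
  set β := beta2Sq ν (axisCube c (3 * sQ))
  set D := diam (axisCube c (3 * sQ))
  have hD : D = 3 * sQ * √n := diam_axisCube c (by positivity)
  have ha4 : 3 + 4 * √n ≤ a := by rw [ha]; linarith [Real.sqrt_nonneg n]
  have ha0 : 0 ≤ a := by linarith [Real.sqrt_nonneg n]
  set T := 2 / 3 * a * ε * b * D with hT_def
  have hT : 0 ≤ T := by positivity
  have hΓL : ∀ z ∈ Γ ∩ axisCube c (a * sQ), infDist z L ≤ T := fun z hz => by
    have hβε : betaSet Γ (axisCube c (a * sQ)) ≤ ENNReal.ofReal (ε * b) := by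
      rw [ENNReal.ofReal_mul hε.le, ← hβsqrt]; exact hβ.le
    refine (infDist_le_of_betaSet_le (by positivity) hβε hLsup hz).trans_eq ?_
    rw [diam_axisCube c (by positivity), hT_def, hD]; ring
  have hF : {x ∈ axisCube c (3 * sQ) | ENNReal.ofReal (2 / 3 * a * ε) * β ^ (1 / 2 : ℝ) *
      ENNReal.ofReal D < ENNReal.ofReal (infDist x L)} =
        {x ∈ axisCube c (3 * sQ) | T < infDist x L} := by
    rw [hβsqrt, ← ENNReal.ofReal_mul (by positivity), ← ENNReal.ofReal_mul (by positivity)]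
    ext x
    exact and_congr_right fun _ => ENNReal.ofReal_lt_ofReal_iff_of_nonneg hT
  have hC : 3 * ENNReal.ofReal ((T / D) ^ 2) ≤ β / 2 :=
    hβb ▸ three_mul_ofReal_sq_mul_div_self_le (by positivity) diam_nonneg
      (by nlinarith [mul_le_mul_of_nonneg_right hε2 (sq_nonneg b)])
  rw [hF, show (4 : ℝ≥0∞) = 2 * 2 by norm_num, mul_assoc, mul_div_assoc]
  refine ENNReal.le_two_mul_of_le_add_half (hβb ▸ ENNReal.ofReal_ne_top) ?_
  calc β ≤ (∫⁻ x in axisCube c (3 * sQ), ENNReal.ofReal ((infDist x L / D) ^ 2) ∂ν) /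
        ν (axisCube c (3 * sQ)) := iInf₂_le L hL
    _ ≤ _ := setLIntegral_sq_div_div_measure_le (continuous_infDist_pt Γ).measurable
        (fun _ _ => infDist_nonneg)
        fun x hx => infDist_le_infDist_add_of_mem_axisCube hsQ.le ha4 hz₀ hΓL hx
    _ ≤ _ := by gcongr

/-- Let `n ≥ 2`, let `ν` be a finite Borel measure on `ℝⁿ`, let `Γ` be a
rectifiable curve, and let `Q` be a cube (center `c`, side `sQ > 0`) with `Q ∩ Γ ≠ ∅` and
`ν(Q) > 0`. Let `a = 3 + 6√n` and `ε > 0` with `3(2/3)²a²ε² ≤ 1/2`. If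
`β_Γ(aQ) < ε β₂(ν,3Q)`, then for any line `ℓ` with
`sup_{z ∈ Γ∩aQ} dist(z,ℓ) ≤ 2β_Γ(aQ) diam aQ`, one has
`β₂(ν,3Q)² ≤ 4 ∫_F (dist(x,Γ)/diam 3Q)² dν(x)/ν(3Q)` where
`F = {x ∈ 3Q : dist(x,ℓ) > (2/3)aε β₂(ν,3Q) diam 3Q}`. -/
theorem beta2Sq_le_four_lintegral (n : ℕ) (hn : 2 ≤ n)
    (ν : Measure (EuclideanSpace ℝ (Fin n))) [IsFiniteMeasure ν]
    (Γ : Set (EuclideanSpace ℝ (Fin n))) (hΓ : IsRectifiableCurve Γ)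
    (c : EuclideanSpace ℝ (Fin n)) (sQ : ℝ) (hsQ : 0 < sQ)
    (hQΓ : (axisCube c sQ ∩ Γ).Nonempty) (hQν : 0 < ν (axisCube c sQ))
    (a ε : ℝ) (ha : a = 3 + 6 * Real.sqrt n) (hε : 0 < ε)
    (hε2 : 3 * (2 / 3) ^ 2 * a ^ 2 * ε ^ 2 ≤ 1 / 2)
    (hβ : betaSet Γ (axisCube c (a * sQ)) <
      ENNReal.ofReal ε * beta2Sq ν (axisCube c (3 * sQ)) ^ (1 / 2 : ℝ))
    (L : Set (EuclideanSpace ℝ (Fin n))) (hL : IsLine L)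
    (hLsup : ∀ z ∈ Γ ∩ axisCube c (a * sQ),
      ENNReal.ofReal (Metric.infDist z L) ≤
        2 * betaSet Γ (axisCube c (a * sQ)) *
          ENNReal.ofReal (Metric.diam (axisCube c (a * sQ)))) :
    beta2Sq ν (axisCube c (3 * sQ)) ≤
      4 * (∫⁻ x in {x ∈ axisCube c (3 * sQ) |
              ENNReal.ofReal ((2 / 3) * a * ε) * beta2Sq ν (axisCube c (3 * sQ)) ^ (1 / 2 : ℝ) *
                  ENNReal.ofReal (Metric.diam (axisCube c (3 * sQ)))
                < ENNReal.ofReal (Metric.infDist x L)},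
            ENNReal.ofReal ((Metric.infDist x Γ / Metric.diam (axisCube c (3 * sQ))) ^ 2) ∂ν)
          / ν (axisCube c (3 * sQ)) :=
  beta2Sq_le_four_lintegral_general n ν Γ c sQ hsQ hQΓ a ε ha hε hε2 hβ L hL hLsup

end
end
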